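/- arXiv:1301.5715 — 3 statements merged into one kernel-verified Lean document; each statement's English description precedes it below -/
import Mathlib

section
/- Let ψ: [0,T] → ℝ be continuous increasing with ψ(0)=0. The set V_{2,ψ} of continuous functions η: [-T,0] → ℝ whose deterministic quadratic variation [η] exists and equals ψ is a closed subset of the Banach space V₂. -/
open MeasureTheory Filter
open scoped Topology

/-- A function `g : ℝ → ℝ`, thought of as a continuous function on `[-T,0]`, extended naturally
by constancy outside `[-T,0]`. -/
def ExtCont (T : ℝ) (g : ℝ → ℝ) : Prop :=
  Continuous g ∧ (∀ x : ℝ, 0 ≤ x → g x = g 0) ∧ (∀ x : ℝ, x ≤ -T → g x = g (-T))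

/-- The `ε`-approximation of the 2-regularization variation. -/
noncomputable def qvApprox (T : ℝ) (g : ℝ → ℝ) (ε : ℝ) : ℝ :=
  (1 / ε) * ∫ s in (-T)..0, (g (s + ε) - g s) ^ 2

/-- The 2-regularization variation. -/
noncomputable def twoVar (T : ℝ) (g : ℝ → ℝ) : ℝ :=
  sSup (qvApprox T g '' Set.Ioo (0 : ℝ) 1)

/-- Membership in `V₂`. -/
def MemV2 (T : ℝ) (g : ℝ → ℝ) : Prop :=
  BddAbove (qvApprox T g '' Set.Ioo (0 : ℝ) 1)

/-- The sup norm on `[-T,0]`. -/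
noncomputable def supIcc (T : ℝ) (g : ℝ → ℝ) : ℝ :=
  sSup ((fun x => |g x|) '' Set.Icc (-T) (0 : ℝ))

/-- The norm of `V₂`. -/
noncomputable def V2norm (T : ℝ) (g : ℝ → ℝ) : ℝ :=
  supIcc T g + twoVar T g

/-- `g` has deterministic quadratic variation equal to `ψ`: for every `x ∈ [-T,0]`,
`(1/ε) ∫ₓ⁰ (g(r+ε) - g(r))² dr → ψ(-x)` as `ε → 0⁺`.  This is membership in `V_{2,ψ}`. -/
def HasQV (T : ℝ) (g : ℝ → ℝ) (ψ : ℝ → ℝ) : Prop :=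
  ∀ x ∈ Set.Icc (-T) (0 : ℝ),
    Tendsto (fun ε => (1 / ε) * ∫ r in x..(0 : ℝ), (g (r + ε) - g r) ^ 2)
      (𝓝[>] 0) (𝓝 (ψ (-x)))

/- ### Auxiliary lemmas -/

lemma intInt (f : ℝ → ℝ) (hf : Continuous f) (ε a b : ℝ) :
    IntervalIntegrable (fun r => (f (r + ε) - f r) ^ 2) volume a b :=
  (((hf.comp (continuous_id.add continuous_const)).sub hf).pow 2).intervalIntegrable a b

lemma qv_nonneg (f : ℝ → ℝ) (ε x : ℝ) (hε : 0 < ε) (hx : x ≤ 0) :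
    0 ≤ (1 / ε) * ∫ r in x..(0:ℝ), (f (r + ε) - f r) ^ 2 := by
  apply mul_nonneg (by positivity)
  exact intervalIntegral.integral_nonneg hx (fun r _ => sq_nonneg _)

lemma restrict_le (T : ℝ) (f : ℝ → ℝ) (hf : Continuous f) (x ε : ℝ) (hε : 0 < ε)
    (hx : -T ≤ x) :
    (1/ε) * ∫ r in x..(0:ℝ), (f (r + ε) - f r) ^ 2 ≤ qvApprox T f ε := by
  unfold qvApprox
  apply mul_le_mul_of_nonneg_left _ (by positivity : (0:ℝ) ≤ 1/ε)
  have hadd := intervalIntegral.integral_add_adjacent_intervals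
    (intInt f hf ε (-T) x) (intInt f hf ε x 0)
  have h1 : 0 ≤ ∫ r in (-T)..x, (f (r + ε) - f r) ^ 2 :=
    intervalIntegral.integral_nonneg hx (fun r _ => sq_nonneg _)
  linarith

lemma qvApprox_le_twoVar (T : ℝ) (f : ℝ → ℝ) (m : MemV2 T f) (ε : ℝ)
    (hε : ε ∈ Set.Ioo (0:ℝ) 1) : qvApprox T f ε ≤ twoVar T f :=
  le_csSup m ⟨ε, hε, rfl⟩

lemma qvApprox_nonneg (T : ℝ) (hT : 0 < T) (f : ℝ → ℝ) (ε : ℝ) (hε : 0 < ε) :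
    0 ≤ qvApprox T f ε := by
  apply mul_nonneg (by positivity)
  exact intervalIntegral.integral_nonneg (by linarith) (fun r _ => sq_nonneg _)

lemma supIcc_nonneg (T : ℝ) (hT : 0 < T) (f : ℝ → ℝ) (hf : Continuous f) : 0 ≤ supIcc T f := by
  have h0 : (0:ℝ) ∈ Set.Icc (-T) (0:ℝ) := ⟨by linarith, le_refl _⟩
  have : |f 0| ≤ supIcc T f := by
    apply le_csSup
    · exact (isCompact_Icc.image_of_continuousOn (hf.abs.continuousOn)).bddAbove
    · exact ⟨0, h0, rfl⟩
  exact le_trans (abs_nonneg _) this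

lemma memV2_sub (T : ℝ) (hT : 0 < T) (f₁ f₂ : ℝ → ℝ) (h₁ : Continuous f₁) (h₂ : Continuous f₂)
    (m₁ : MemV2 T f₁) (m₂ : MemV2 T f₂) : MemV2 T (fun x => f₁ x - f₂ x) := by
  refine ⟨2 * twoVar T f₁ + 2 * twoVar T f₂, ?_⟩
  rintro y ⟨ε, hε, rfl⟩
  have hε0 : 0 < ε := hε.1
  have hia := intInt f₁ h₁ ε (-T) 0
  have hib := intInt f₂ h₂ ε (-T) 0
  have hsub : IntervalIntegrable (fun r => ((f₁ (r+ε) - f₂ (r+ε)) - (f₁ r - f₂ r))^2)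
      volume (-T) 0 := intInt (fun x => f₁ x - f₂ x) (h₁.sub h₂) ε (-T) 0
  have step1 : (∫ r in (-T)..(0:ℝ), ((f₁ (r+ε) - f₂ (r+ε)) - (f₁ r - f₂ r))^2)
      ≤ ∫ r in (-T)..(0:ℝ), (2 * (f₁ (r+ε) - f₁ r)^2 + 2 * (f₂ (r+ε) - f₂ r)^2) := by
    apply intervalIntegral.integral_mono_on (by linarith) hsub
      ((hia.const_mul _).add (hib.const_mul _))
    intro r _
    nlinarith [sq_nonneg ((f₁ (r+ε) - f₁ r) + (f₂ (r+ε) - f₂ r))]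
  rw [intervalIntegral.integral_add (hia.const_mul _) (hib.const_mul _),
    intervalIntegral.integral_const_mul, intervalIntegral.integral_const_mul] at step1
  have h1ε : (0:ℝ) ≤ 1/ε := by positivity
  have := mul_le_mul_of_nonneg_left step1 h1ε
  have e1 := qvApprox_le_twoVar T f₁ m₁ ε hε
  have e2 := qvApprox_le_twoVar T f₂ m₂ ε hε
  unfold qvApprox at *
  nlinarith

lemma key_ineq (x ε δ : ℝ) (hx : x ≤ 0) (hε : 0 < ε) (hδ : 0 < δ)
    (w u : ℝ → ℝ) (hw : Continuous w) (hu : Continuous u) :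
    (1/ε) * ∫ r in x..(0:ℝ), (w (r+ε) - w r)^2
      ≤ (1+δ) * ((1/ε) * ∫ r in x..(0:ℝ), (u (r+ε) - u r)^2)
        + (1+1/δ) * ((1/ε) * ∫ r in x..(0:ℝ), ((w (r+ε) - u (r+ε)) - (w r - u r))^2) := by
  have hia := intInt u hu ε x 0
  have hib : IntervalIntegrable (fun r => ((w (r+ε) - u (r+ε)) - (w r - u r))^2) volume x 0 :=
    intInt (fun y => w y - u y) (hw.sub hu) ε x 0
  have hwint := intInt w hw ε x 0
  have hδe : δ * (1/δ) = 1 := by field_simp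
  have step1 : (∫ r in x..(0:ℝ), (w (r+ε) - w r)^2)
      ≤ ∫ r in x..(0:ℝ),
          ((1+δ) * (u (r+ε) - u r)^2 + (1+1/δ) * ((w (r+ε) - u (r+ε)) - (w r - u r))^2) := by
    apply intervalIntegral.integral_mono_on hx hwint
      ((hia.const_mul _).add (hib.const_mul _))
    intro r _
    nlinarith [sq_nonneg (δ * (u (r+ε) - u r) - ((w (r+ε) - u (r+ε)) - (w r - u r))), hδ, hδe,
      mul_pos hδ hδ, sq_nonneg (u (r+ε) - u r),
      sq_nonneg ((w (r+ε) - u (r+ε)) - (w r - u r))]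
  rw [intervalIntegral.integral_add (hia.const_mul _) (hib.const_mul _),
    intervalIntegral.integral_const_mul, intervalIntegral.integral_const_mul] at step1
  have h1ε : (0:ℝ) ≤ 1/ε := by positivity
  nlinarith [mul_le_mul_of_nonneg_left step1 h1ε, hδ]

/-- Let `ψ : [0,T] → ℝ` be continuous, increasing with `ψ(0) = 0`.  The set
`V_{2,ψ}` of continuous functions `η : [-T,0] → ℝ` whose deterministic quadratic variation
exists and equals `ψ` is closed in the Banach space `V₂`: if `gₙ ∈ V_{2,ψ}` and `gₙ → g` in the
`V₂`-norm with `g ∈ V₂`, then `g ∈ V_{2,ψ}`. -/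
theorem stmt6 (T : ℝ) (hT : 0 < T) (ψ : ℝ → ℝ)
    (hψc : ContinuousOn ψ (Set.Icc 0 T)) (hψm : MonotoneOn ψ (Set.Icc 0 T))
    (hψ0 : ψ 0 = 0)
    (gseq : ℕ → ℝ → ℝ)
    (hg : ∀ n, ExtCont T (gseq n) ∧ MemV2 T (gseq n) ∧ HasQV T (gseq n) ψ)
    (g : ℝ → ℝ) (hgl : ExtCont T g ∧ MemV2 T g)
    (hconv : Tendsto (fun n => V2norm T (fun x => gseq n x - g x)) atTop (𝓝 0)) :
    HasQV T g ψ := by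
  intro x hx
  have hgc : Continuous g := hgl.1.1
  set L := ψ (-x) with hLdef
  have hxT : -T ≤ x := hx.1
  have hx0 : x ≤ 0 := hx.2
  have hL0 : 0 ≤ L := by
    have h0m : (0:ℝ) ∈ Set.Icc (0:ℝ) T := ⟨le_refl _, hT.le⟩
    have hxm : -x ∈ Set.Icc (0:ℝ) T := ⟨by linarith, by linarith⟩
    have := hψm h0m hxm (by linarith)
    rw [hψ0] at this; exact this
  rw [Metric.tendsto_nhds]
  intro η hη
  -- constants
  set M' := max (twoVar T g) 0 with hM'def
  set K := M' + L + 2 with hKdef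
  have hM'0 : 0 ≤ M' := le_max_right _ _
  have hK : 0 < K := by simp only [hKdef]; linarith
  set δ := η / (4 * K) with hδdef
  have hδ : 0 < δ := by positivity
  have hδK : δ * K = η / 4 := by rw [hδdef, div_mul_eq_mul_div, mul_div_mul_right _ _ hK.ne']
  have h1δ : 0 < 1 + 1/δ := by positivity
  set c := η / (4 * (1 + 1/δ)) with hcdef
  have hc : 0 < c := by positivity
  have hcd : (1 + 1/δ) * c = η / 4 := by
    rw [hcdef]; field_simp
  -- choose n
  obtain ⟨n, hCn⟩ := (hconv.eventually (gt_mem_nhds hc)).exists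
  have hgnc : Continuous (gseq n) := (hg n).1.1
  set Cn := V2norm T (fun y => gseq n y - g y) with hCndef
  have mh : MemV2 T (fun y => gseq n y - g y) :=
    memV2_sub T hT (gseq n) g hgnc hgc (hg n).2.1 hgl.2
  have hsupnn : 0 ≤ supIcc T (fun y => gseq n y - g y) :=
    supIcc_nonneg T hT _ (hgnc.sub hgc)
  -- D ≤ Cn for ε ∈ (0,1)
  have D_le : ∀ ε ∈ Set.Ioo (0:ℝ) 1,
      (1/ε) * ∫ r in x..(0:ℝ), ((gseq n (r+ε) - g (r+ε)) - (gseq n r - g r))^2 ≤ Cn := by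
    intro ε hε
    have h1 : (1/ε) * ∫ r in x..(0:ℝ), ((gseq n (r+ε) - g (r+ε)) - (gseq n r - g r))^2
        ≤ qvApprox T (fun y => gseq n y - g y) ε :=
      restrict_le T (fun y => gseq n y - g y) (hgnc.sub hgc) x ε hε.1 hxT
    have h2 := qvApprox_le_twoVar T _ mh ε hε
    have : twoVar T (fun y => gseq n y - g y) ≤ Cn := by
      rw [hCndef]; unfold V2norm; linarith
    linarith
  -- B ≤ M' for ε ∈ (0,1)
  have B_le : ∀ ε ∈ Set.Ioo (0:ℝ) 1,
      (1/ε) * ∫ r in x..(0:ℝ), (g (r+ε) - g r)^2 ≤ M' := by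
    intro ε hε
    have h1 := restrict_le T g hgc x ε hε.1 hxT
    have h2 := qvApprox_le_twoVar T g hgl.2 ε hε
    have : twoVar T g ≤ M' := le_max_left _ _
    linarith
  -- convergence of the n-th approximation
  have hQn := (hg n).2.2 x hx
  have hmin : 0 < min (η/4) 1 := lt_min (by linarith) one_pos
  have h2 := Metric.tendsto_nhds.mp hQn _ hmin
  have h1 : ∀ᶠ ε in 𝓝[>] (0:ℝ), ε ∈ Set.Ioo (0:ℝ) 1 :=
    Ioo_mem_nhdsGT_of_mem ⟨le_refl _, one_pos⟩
  filter_upwards [h1, h2] with ε hεI hAL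
  set A := (1/ε) * ∫ r in x..(0:ℝ), (gseq n (r+ε) - gseq n r)^2 with hAdef
  set B := (1/ε) * ∫ r in x..(0:ℝ), (g (r+ε) - g r)^2 with hBdef
  set D := (1/ε) * ∫ r in x..(0:ℝ), ((gseq n (r+ε) - g (r+ε)) - (gseq n r - g r))^2 with hDdef
  have hε0 : 0 < ε := hεI.1
  -- key inequalities
  have ki2 : A ≤ (1+δ) * B + (1+1/δ) * D :=
    key_ineq x ε δ hx0 hε0 hδ (gseq n) g hgnc hgc
  have flip : (∫ r in x..(0:ℝ), ((g (r+ε) - gseq n (r+ε)) - (g r - gseq n r))^2)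
      = ∫ r in x..(0:ℝ), ((gseq n (r+ε) - g (r+ε)) - (gseq n r - g r))^2 :=
    intervalIntegral.integral_congr (fun r _ => by ring)
  have ki1 : B ≤ (1+δ) * A + (1+1/δ) * D := by
    have := key_ineq x ε δ hx0 hε0 hδ g (gseq n) hgc hgnc
    rw [flip] at this
    exact this
  -- bounds
  have hALabs : |A - L| < min (η/4) 1 := by
    have := hAL; rwa [Real.dist_eq] at this
  have hAL4 : |A - L| < η / 4 := lt_of_lt_of_le hALabs (min_le_left _ _)
  have hAL1 : A - L < 1 := lt_of_le_of_lt (le_abs_self _) (lt_of_lt_of_le hALabs (min_le_right _ _))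
  have hAK : A ≤ K := by
    simp only [hKdef]
    linarith
  have hBM : B ≤ M' := B_le ε hεI
  have hBK : B ≤ K := by simp only [hKdef]; linarith
  have hDC : D ≤ Cn := D_le ε hεI
  have hδA : δ * A ≤ η / 4 := by
    calc δ * A ≤ δ * K := mul_le_mul_of_nonneg_left hAK hδ.le
    _ = η / 4 := hδK
  have hδB : δ * B ≤ η / 4 := by
    calc δ * B ≤ δ * K := mul_le_mul_of_nonneg_left hBK hδ.le
    _ = η / 4 := hδK
  have hD4 : (1 + 1/δ) * D < η / 4 := by
    calc (1 + 1/δ) * D ≤ (1 + 1/δ) * Cn := mul_le_mul_of_nonneg_left hDC h1δ.le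
    _ < (1 + 1/δ) * c := by exact mul_lt_mul_of_pos_left hCn h1δ
    _ = η / 4 := hcd
  have exp1 : (1+δ) * A = A + δ * A := by ring
  have exp2 : (1+δ) * B = B + δ * B := by ring
  have habs : |A - L| < η / 4 := hAL4
  have h1' : A - L < η / 4 := lt_of_le_of_lt (le_abs_self _) habs
  have h2' : L - A < η / 4 := by
    have := neg_abs_le (A - L); linarith [abs_nonneg (A - L), (abs_lt.mp habs).1]
  rw [Real.dist_eq, abs_sub_lt_iff]
  constructor
  · -- B - L < η
    rw [exp1] at ki1
    linarith
  · -- L - B < η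
    rw [exp2] at ki2
    linarith
end

section
/- Let f: [a,b] → ℝ be a function of bounded variation (cadlag) and g a finite Borel measure on [a,b] with a continuous bounded density. Then the deterministic forward integral ∫_{(a,b]} g(s) d⁻f(s), defined as the limit as ε→0⁺ of ∫_{(a,b]} g(s)(f_J(s+ε) − f_J(s))/ε ds where f_J is the natural cadlag extension of f by f(b) on the right and 0 on the left of a, exists and coincides with the Lebesgue–Stieltjes integral ∫_{(a,b]} g df. -/
open MeasureTheory Filter
open scoped Topology ENNReal

/-- The natural cadlag extension `f_J` of `f : [a,b] → ℝ`: `f_J(x) = 0` for `x < a`,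
`f_J(x) = f(x)` on `[a,b]`, `f_J(x) = f(b)` for `x > b`. -/
noncomputable def fJ (a b : ℝ) (f : ℝ → ℝ) (x : ℝ) : ℝ :=
  if x < a then 0 else if x ≤ b then f x else f b

lemma meas_aux (ν : Measure ℝ) [IsFiniteMeasure ν] {ε : ℝ} (hε : 0 ≤ ε) :
    Measurable (fun s => (ν (Set.Ioc s (s + ε))).toReal) := by
  have hF : Monotone (fun x => (ν (Set.Iic x)).toReal) := fun x y hxy =>
    ENNReal.toReal_mono (measure_ne_top _ _) (measure_mono (Set.Iic_subset_Iic.mpr hxy))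
  have key : ∀ s : ℝ, (ν (Set.Ioc s (s + ε))).toReal
      = (ν (Set.Iic (s + ε))).toReal - (ν (Set.Iic s)).toReal := by
    intro s
    have hsub : Set.Iic s ⊆ Set.Iic (s + ε) := Set.Iic_subset_Iic.mpr (by linarith)
    have h1 : ν (Set.Ioc s (s + ε)) = ν (Set.Iic (s + ε)) - ν (Set.Iic s) := by
      rw [← Set.Iic_sdiff_Iic,
        measure_diff hsub measurableSet_Iic.nullMeasurableSet (measure_ne_top _ _)]
    rw [h1, ENNReal.toReal_sub_of_le (measure_mono hsub) (measure_ne_top _ _)]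
  simp_rw [key]
  exact ((hF.measurable).comp (measurable_id.add_const ε)).sub hF.measurable

lemma pointwise_lim (a b : ℝ) (g : ℝ → ℝ) (hg : Continuous g) {t : ℝ} (ht : t ∈ Set.Ioc a b) :
    Tendsto (fun ε => (∫ s in Set.Ioc (t - ε) t, Set.indicator (Set.Ioc a b) g s) / ε)
      (𝓝[>] (0:ℝ)) (𝓝 (g t)) := by
  rw [Metric.tendsto_nhdsWithin_nhds]
  intro δ hδ
  obtain ⟨η, hη, hηc⟩ := Metric.continuousAt_iff.mp (hg.continuousAt (x := t)) (δ / 2) (by linarith)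
  refine ⟨min η (t - a), by simp [hη, ht.1], ?_⟩
  intro ε hε hdist
  have hε0 : (0:ℝ) < ε := hε
  have hdist' : ε < min η (t - a) := by
    rwa [Real.dist_eq, sub_zero, abs_of_pos hε0] at hdist
  have hεη : ε < η := lt_of_lt_of_le hdist' (min_le_left _ _)
  have hεa : ε < t - a := lt_of_lt_of_le hdist' (min_le_right _ _)
  have hvol : volume (Set.Ioc (t - ε) t) < ∞ := by
    simp [Real.volume_Ioc]
  have hvolr : (volume (Set.Ioc (t - ε) t)).toReal = ε := by
    rw [Real.volume_Ioc, ENNReal.toReal_ofReal (by linarith : (0:ℝ) ≤ t - (t - ε))]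
    ring_nf
  have hsub : Set.Ioc (t - ε) t ⊆ Set.Ioc a b := fun x hx =>
    ⟨by linarith [hx.1], le_trans hx.2 ht.2⟩
  have heq : ∫ s in Set.Ioc (t - ε) t, Set.indicator (Set.Ioc a b) g s
      = ∫ s in Set.Ioc (t - ε) t, g s := by
    refine setIntegral_congr_fun measurableSet_Ioc fun x hx => ?_
    exact Set.indicator_of_mem (hsub hx) g
  rw [heq]
  have hgint : IntegrableOn g (Set.Ioc (t - ε) t) := hg.integrableOn_Ioc
  have hconst : ∫ s in Set.Ioc (t - ε) t, g t = ε * g t := by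
    rw [setIntegral_const, smul_eq_mul, measureReal_def, hvolr]
  have hdiff : (∫ s in Set.Ioc (t - ε) t, g s) - ε * g t
      = ∫ s in Set.Ioc (t - ε) t, (g s - g t) := by
    rw [← hconst, ← integral_sub hgint (integrableOn_const hvol.ne)]
  have hbound : ‖∫ s in Set.Ioc (t - ε) t, (g s - g t)‖ ≤ (δ / 2) * ε := by
    have key := norm_setIntegral_le_of_norm_le_const
      (μ := volume) (s := Set.Ioc (t - ε) t) (f := fun s => g s - g t) (C := δ / 2)
      hvol
      (fun x hx => by
        have hdx : dist x t < η := by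
          rw [Real.dist_eq]
          have h1 : t - ε < x := hx.1
          have h2 : x ≤ t := hx.2
          rw [abs_of_nonpos (by linarith)]
          linarith
        have := hηc hdx
        rw [Real.norm_eq_abs]
        exact le_of_lt (by rwa [Real.dist_eq] at this))
    rwa [measureReal_def, hvolr] at key
  rw [Real.dist_eq]
  have hrw : (∫ s in Set.Ioc (t - ε) t, g s) / ε - g t
      = (∫ s in Set.Ioc (t - ε) t, (g s - g t)) / ε := by
    rw [← hdiff]; field_simp
  rw [hrw, abs_div, abs_of_pos hε0]
  calc |∫ s in Set.Ioc (t - ε) t, (g s - g t)| / ε ≤ ((δ / 2) * ε) / ε := by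
        gcongr
        exact hbound
    _ = δ / 2 := by field_simp
    _ < δ := by linarith

lemma fubini_step (a b : ℝ) (ν : Measure ℝ) [IsFiniteMeasure ν]
    (g : ℝ → ℝ) (hg : Continuous g) (C : ℝ) (hC : ∀ x, |g x| ≤ C)
    {ε : ℝ} (hε : 0 < ε) :
    ∫ s in Set.Ioc a b, g s * (ν (Set.Ioc s (s + ε))).toReal
      = ∫ t, (∫ s in Set.Ioc (t - ε) t, Set.indicator (Set.Ioc a b) g s) ∂ν := by
  set μ0 : Measure ℝ := volume.restrict (Set.Ioc a b) with hμ0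
  haveI : IsFiniteMeasure μ0 :=
    ⟨by rw [hμ0, Measure.restrict_apply_univ]; exact measure_Ioc_lt_top⟩
  set F : ℝ → ℝ → ℝ := fun s t => Set.indicator (Set.Ioc s (s + ε)) (fun _ => g s) t with hF
  have hSmeas : MeasurableSet {p : ℝ × ℝ | p.2 ∈ Set.Ioc p.1 (p.1 + ε)} := by
    apply MeasurableSet.inter
    · exact measurableSet_lt measurable_fst measurable_snd
    · exact measurableSet_le measurable_snd (measurable_fst.add_const ε)
  have hFuncurry : Function.uncurry F
      = Set.indicator {p : ℝ × ℝ | p.2 ∈ Set.Ioc p.1 (p.1 + ε)} (fun p => g p.1) := by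
    funext p
    rcases p with ⟨s, t⟩
    simp only [Function.uncurry, hF, Set.indicator_apply, Set.mem_setOf_eq]
  have hFmeas : Measurable (Function.uncurry F) := by
    rw [hFuncurry]
    exact (hg.measurable.comp measurable_fst).indicator hSmeas
  have hFint : Integrable (Function.uncurry F) (μ0.prod ν) := by
    refine (integrable_const C).mono' hFmeas.aestronglyMeasurable ?_
    refine Filter.Eventually.of_forall fun p => ?_
    rw [hFuncurry]
    calc ‖Set.indicator {p : ℝ × ℝ | p.2 ∈ Set.Ioc p.1 (p.1 + ε)} (fun p => g p.1) p‖
        ≤ ‖g p.1‖ := norm_indicator_le_norm_self _ _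
      _ ≤ C := hC p.1
  have step1 : ∀ s : ℝ, g s * (ν (Set.Ioc s (s + ε))).toReal = ∫ t, F s t ∂ν := by
    intro s
    rw [hF]
    rw [integral_indicator measurableSet_Ioc, setIntegral_const, smul_eq_mul, mul_comm, measureReal_def]
  have swap := integral_integral_swap (μ := μ0) (ν := ν) hFint
  calc ∫ s in Set.Ioc a b, g s * (ν (Set.Ioc s (s + ε))).toReal
      = ∫ s, (∫ t, F s t ∂ν) ∂μ0 := by
        rw [hμ0]; exact setIntegral_congr_fun measurableSet_Ioc fun s _ => step1 s
    _ = ∫ t, (∫ s, F s t ∂μ0) ∂ν := swap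
    _ = ∫ t, (∫ s in Set.Ioc (t - ε) t, Set.indicator (Set.Ioc a b) g s) ∂ν := by
        refine integral_congr_ae (Filter.Eventually.of_forall fun t => ?_)
        have h1 : ∀ s : ℝ, F s t = Set.indicator (Set.Ico (t - ε) t) g s := by
          intro s
          rw [hF]
          simp only [Set.indicator_apply, Set.mem_Ioc, Set.mem_Ico]
          refine if_congr ?_ rfl rfl
          constructor
          · rintro ⟨h1, h2⟩; constructor <;> linarith
          · rintro ⟨h1, h2⟩; constructor <;> linarith
        calc ∫ s, F s t ∂μ0
            = ∫ s in Set.Ioc a b, Set.indicator (Set.Ico (t - ε) t) g s := by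
              rw [hμ0]; exact integral_congr_ae (Filter.Eventually.of_forall fun s => h1 s)
          _ = ∫ s in Set.Ioc a b ∩ Set.Ico (t - ε) t, g s :=
              setIntegral_indicator measurableSet_Ico
          _ = ∫ s in Set.Ioc (t - ε) t ∩ Set.Ioc a b, g s := by
              refine setIntegral_congr_set ?_
              rw [Set.inter_comm]
              exact MeasureTheory.ae_eq_set_inter Ico_ae_eq_Ioc (ae_eq_refl _)
          _ = ∫ s in Set.Ioc (t - ε) t, Set.indicator (Set.Ioc a b) g s :=
              (setIntegral_indicator measurableSet_Ioc).symm

lemma key_lim (a b : ℝ) (ν : Measure ℝ) [IsFiniteMeasure ν]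
    (hν : ∀ᵐ t ∂ν, t ∈ Set.Ioc a b)
    (g : ℝ → ℝ) (hg : Continuous g) (C : ℝ) (hC : ∀ x, |g x| ≤ C) :
    Tendsto (fun ε => ∫ s in Set.Ioc a b, g s * (ν (Set.Ioc s (s + ε))).toReal / ε)
      (𝓝[>] (0:ℝ)) (𝓝 (∫ t, g t ∂ν)) := by
  set g₀ : ℝ → ℝ := Set.indicator (Set.Ioc a b) g with hg₀
  have hg₀int : Integrable g₀ := by
    rw [hg₀, integrable_indicator_iff measurableSet_Ioc]
    exact hg.integrableOn_Ioc
  have hC0 : 0 ≤ C := le_trans (abs_nonneg _) (hC 0)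
  -- the regularized integrals, after Fubini
  have main : ∀ ε ∈ Set.Ioi (0:ℝ),
      ∫ s in Set.Ioc a b, g s * (ν (Set.Ioc s (s + ε))).toReal / ε
        = ∫ t, (∫ s in Set.Ioc (t - ε) t, g₀ s) / ε ∂ν := by
    intro ε hε
    rw [integral_div, integral_div, fubini_step a b ν g hg C hC hε]
  have heqev : (fun ε => ∫ t, (∫ s in Set.Ioc (t - ε) t, g₀ s) / ε ∂ν)
      =ᶠ[𝓝[>] (0:ℝ)] fun ε => ∫ s in Set.Ioc a b, g s * (ν (Set.Ioc s (s + ε))).toReal / ε := by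
    filter_upwards [self_mem_nhdsWithin] with ε hε
    exact (main ε hε).symm
  refine Tendsto.congr' heqev ?_
  refine tendsto_integral_filter_of_dominated_convergence (fun _ => C) ?_ ?_ ?_ ?_
  · -- a.e. strong measurability
    filter_upwards [self_mem_nhdsWithin] with ε hε
    have hε0 : (0:ℝ) < ε := hε
    have hΨ : Continuous fun x => ∫ s in a..x, g₀ s :=
      intervalIntegral.continuous_primitive (fun _ _ => hg₀int.intervalIntegrable) a
    have heq : (fun t => (∫ s in Set.Ioc (t - ε) t, g₀ s) / ε)
        = fun t => ((∫ s in a..t, g₀ s) - ∫ s in a..(t - ε), g₀ s) / ε := by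
      funext t
      congr 1
      rw [intervalIntegral.integral_interval_sub_left hg₀int.intervalIntegrable
        hg₀int.intervalIntegrable]
      rw [intervalIntegral.integral_of_le (by linarith)]
    rw [heq]
    exact ((hΨ.sub (hΨ.comp (continuous_id.sub continuous_const))).div_const ε).aestronglyMeasurable
  · -- uniform bound
    filter_upwards [self_mem_nhdsWithin] with ε hε
    have hε0 : (0:ℝ) < ε := hε
    refine Filter.Eventually.of_forall fun t => ?_
    have hvol : volume (Set.Ioc (t - ε) t) < ⊤ := measure_Ioc_lt_top
    have hvolr : (volume (Set.Ioc (t - ε) t)).toReal = ε := by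
      rw [Real.volume_Ioc, ENNReal.toReal_ofReal (by linarith : (0:ℝ) ≤ t - (t - ε))]
      ring_nf
    have hb : ‖∫ s in Set.Ioc (t - ε) t, g₀ s‖ ≤ C * ε := by
      have key := norm_setIntegral_le_of_norm_le_const
        (μ := volume) (s := Set.Ioc (t - ε) t) (f := g₀) (C := C)
        hvol
        (fun x _ => by
          calc ‖g₀ x‖ ≤ ‖g x‖ := norm_indicator_le_norm_self _ _
            _ ≤ C := hC x)
      rwa [measureReal_def, hvolr] at key
    rw [Real.norm_eq_abs, abs_div, abs_of_pos hε0]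
    calc |∫ s in Set.Ioc (t - ε) t, g₀ s| / ε ≤ (C * ε) / ε := by gcongr; exact hb
      _ = C := by field_simp
  · exact integrable_const C
  · filter_upwards [hν] with t ht
    exact pointwise_lim a b g hg ht

lemma claim0 (a b : ℝ) (f : ℝ → ℝ) (μ₁ μ₂ : Measure ℝ)
    (hf : ∀ x y : ℝ, a ≤ x → x ≤ y → y ≤ b →
      f y - f x = (μ₁ (Set.Ioc x y)).toReal - (μ₂ (Set.Ioc x y)).toReal)
    {s ε : ℝ} (hs : s ∈ Set.Ioc a b) (hε : 0 < ε) :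
    fJ a b f (s + ε) - fJ a b f s
      = ((μ₁.restrict (Set.Ioc a b)) (Set.Ioc s (s + ε))).toReal
        - ((μ₂.restrict (Set.Ioc a b)) (Set.Ioc s (s + ε))).toReal := by
  have h1 : fJ a b f s = f s := by
    rw [fJ, if_neg (not_lt.mpr hs.1.le), if_pos hs.2]
  have h2 : fJ a b f (s + ε) = f (min (s + ε) b) := by
    rw [fJ, if_neg (not_lt.mpr (by linarith [hs.1] : a ≤ s + ε))]
    rcases le_or_gt (s + ε) b with h | h
    · rw [if_pos h, min_eq_left h]
    · rw [if_neg (not_le.mpr h), min_eq_right h.le]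
  have hseteq : Set.Ioc s (min (s + ε) b) = Set.Ioc s (s + ε) ∩ Set.Ioc a b := by
    ext x
    simp only [Set.mem_Ioc, Set.mem_inter_iff, le_min_iff]
    constructor
    · rintro ⟨hx1, hx2, hx3⟩
      exact ⟨⟨hx1, hx2⟩, lt_trans hs.1 hx1, hx3⟩
    · rintro ⟨⟨hx1, hx2⟩, _, hx3⟩
      exact ⟨hx1, hx2, hx3⟩
  have key := hf s (min (s + ε) b) hs.1.le (le_min (by linarith) hs.2) (min_le_right _ _)
  rw [h1, h2, key, Measure.restrict_apply measurableSet_Ioc,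
    Measure.restrict_apply measurableSet_Ioc, ← hseteq]

/-- Let `f : [a,b] → ℝ` be cadlag of bounded variation, encoded via its
Jordan decomposition: there are finite Borel measures `μ₁, μ₂` with
`f(y) - f(x) = μ₁((x,y]) - μ₂((x,y])` for `a ≤ x ≤ y ≤ b`.  Let `g` be a continuous bounded
density on `[a,b]`.  Then the deterministic forward integral `∫_{(a,b]} g(s) d⁻f(s)`, defined
as the limit as `ε → 0⁺` of `∫_{(a,b]} g(s) (f_J(s+ε) - f_J(s))/ε ds`, exists and coincides
with the Lebesgue–Stieltjes integral `∫_{(a,b]} g df = ∫ g dμ₁ - ∫ g dμ₂`. -/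
theorem stmt7 (a b : ℝ) (hab : a < b) (f : ℝ → ℝ)
    (μ₁ μ₂ : Measure ℝ) [IsFiniteMeasure μ₁] [IsFiniteMeasure μ₂]
    (hf : ∀ x y : ℝ, a ≤ x → x ≤ y → y ≤ b →
      f y - f x = (μ₁ (Set.Ioc x y)).toReal - (μ₂ (Set.Ioc x y)).toReal)
    (g : ℝ → ℝ) (hg : Continuous g) (hgbdd : ∃ C : ℝ, ∀ x : ℝ, |g x| ≤ C) :
    Tendsto (fun ε => ∫ s in Set.Ioc a b, g s * (fJ a b f (s + ε) - fJ a b f s) / ε)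
      (𝓝[>] 0)
      (𝓝 ((∫ s in Set.Ioc a b, g s ∂μ₁) - ∫ s in Set.Ioc a b, g s ∂μ₂)) := by
  obtain ⟨C, hC⟩ := hgbdd
  set ν₁ : Measure ℝ := μ₁.restrict (Set.Ioc a b) with hν₁
  set ν₂ : Measure ℝ := μ₂.restrict (Set.Ioc a b) with hν₂
  haveI hfin1 : IsFiniteMeasure ν₁ := ⟨by rw [hν₁, Measure.restrict_apply_univ]; exact measure_lt_top μ₁ _⟩
  haveI hfin2 : IsFiniteMeasure ν₂ := ⟨by rw [hν₂, Measure.restrict_apply_univ]; exact measure_lt_top μ₂ _⟩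
  have h1 := key_lim a b ν₁ (ae_restrict_mem measurableSet_Ioc) g hg C hC
  have h2 := key_lim a b ν₂ (ae_restrict_mem measurableSet_Ioc) g hg C hC
  have hlim := h1.sub h2
  refine Tendsto.congr' ?_ hlim
  filter_upwards [self_mem_nhdsWithin] with ε hε
  have hε0 : (0:ℝ) < ε := hε
  -- integrability of the two pieces
  have hint : ∀ (ν : Measure ℝ) [IsFiniteMeasure ν],
      Integrable (fun s => g s * (ν (Set.Ioc s (s + ε))).toReal / ε)
        (volume.restrict (Set.Ioc a b)) := by
    intro ν _
    haveI : IsFiniteMeasure (volume.restrict (Set.Ioc a b)) :=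
      ⟨by rw [Measure.restrict_apply_univ]; exact measure_Ioc_lt_top⟩
    refine (integrable_const (C * (ν Set.univ).toReal / ε)).mono'
      (((hg.measurable.mul (meas_aux ν hε0.le)).div_const ε).aestronglyMeasurable) ?_
    refine Filter.Eventually.of_forall fun s => ?_
    rw [Real.norm_eq_abs, abs_div, abs_of_pos hε0, abs_mul,
      abs_of_nonneg ENNReal.toReal_nonneg]
    gcongr <;> first
      | exact le_trans (abs_nonneg _) (hC 0)
      | exact hC s
      | exact measure_ne_top _ _
      | exact Set.subset_univ _
  calc (∫ s in Set.Ioc a b, g s * (ν₁ (Set.Ioc s (s + ε))).toReal / ε)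
        - ∫ s in Set.Ioc a b, g s * (ν₂ (Set.Ioc s (s + ε))).toReal / ε
      = ∫ s in Set.Ioc a b, (g s * (ν₁ (Set.Ioc s (s + ε))).toReal / ε
          - g s * (ν₂ (Set.Ioc s (s + ε))).toReal / ε) :=
        (integral_sub (hint ν₁) (hint ν₂)).symm
    _ = ∫ s in Set.Ioc a b, g s * (fJ a b f (s + ε) - fJ a b f s) / ε := by
        refine setIntegral_congr_fun measurableSet_Ioc fun s hs => ?_
        rw [claim0 a b f μ₁ μ₂ hf hs hε0]
        ring
end

section
/- Let H be a separable Hilbert space continuously embedded in a Banach space ν̄₀ and let A be an H-valued continuous process which has bounded variation as a ν̄₀-valued process, with total variation function ‖A‖. Set ν₀ = ν̄₀* and χ = ν₀ ⊗̂_π ν₀, viewed as a Chi-subspace of (H⊗̂_π H)*. Then (1/ε)∫₀ᵀ |(A_{r+ε} − A_r)⊗(A_{r+ε} − A_r)|_{χ*} dr → 0 in probability as ε→0⁺; in particular A admits a zero χ-quadratic variation. -/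
open MeasureTheory Filter
open scoped Topology

/-- The `χ*`-norm of the elementary tensor `x ⊗ x`, for `χ = ν₀ ⊗̂_π ν₀` with `ν₀ = E*`:
the supremum of `|φ(x) ψ(x)|` over `φ, ψ` in the unit ball of `E*`. -/
noncomputable def dualPairNorm (E : Type*) [NormedAddCommGroup E] [NormedSpace ℝ E]
    (x : E) : ℝ :=
  ⨆ φ : {f : E →L[ℝ] ℝ // ‖f‖ ≤ 1}, ⨆ ψ : {f : E →L[ℝ] ℝ // ‖f‖ ≤ 1},
    |φ.1 x * ψ.1 x|

lemma dualPairNorm_eq (E : Type*) [NormedAddCommGroup E] [NormedSpace ℝ E] [CompleteSpace E]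
    (x : E) : dualPairNorm E x = ‖x‖ ^ 2 := by
  have hne : Nonempty {f : E →L[ℝ] ℝ // ‖f‖ ≤ 1} := ⟨⟨0, by simp⟩⟩
  have key : ∀ f : {f : E →L[ℝ] ℝ // ‖f‖ ≤ 1}, |f.1 x| ≤ ‖x‖ := by
    intro f
    calc |f.1 x| = ‖f.1 x‖ := (Real.norm_eq_abs _).symm
    _ ≤ ‖f.1‖ * ‖x‖ := f.1.le_opNorm x
    _ ≤ ‖x‖ := mul_le_of_le_one_left (norm_nonneg x) f.2
  have hb : ∀ φ ψ : {f : E →L[ℝ] ℝ // ‖f‖ ≤ 1}, |φ.1 x * ψ.1 x| ≤ ‖x‖ ^ 2 := by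
    intro φ ψ
    rw [abs_mul, sq]
    exact mul_le_mul (key φ) (key ψ) (abs_nonneg _) (norm_nonneg x)
  have hbdd : ∀ φ : {f : E →L[ℝ] ℝ // ‖f‖ ≤ 1},
      BddAbove (Set.range fun ψ : {f : E →L[ℝ] ℝ // ‖f‖ ≤ 1} => |φ.1 x * ψ.1 x|) :=
    fun φ => ⟨‖x‖ ^ 2, Set.forall_mem_range.2 fun ψ => hb φ ψ⟩
  have hbdd2 : BddAbove (Set.range fun φ : {f : E →L[ℝ] ℝ // ‖f‖ ≤ 1} =>
      ⨆ ψ : {f : E →L[ℝ] ℝ // ‖f‖ ≤ 1}, |φ.1 x * ψ.1 x|) :=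
    ⟨‖x‖ ^ 2, Set.forall_mem_range.2 fun φ => ciSup_le fun ψ => hb φ ψ⟩
  refine le_antisymm (ciSup_le fun φ => ciSup_le fun ψ => hb φ ψ) ?_
  rcases eq_or_ne x 0 with rfl | hx
  · refine le_trans (by simp) (le_trans (le_ciSup (hbdd hne.some) hne.some) (le_ciSup hbdd2 hne.some))
  · obtain ⟨g, hg1, hgx⟩ := exists_dual_vector ℝ x (norm_ne_zero_iff.2 hx)
    have hgle : ‖g‖ ≤ 1 := le_of_eq hg1
    have : ‖x‖ ^ 2 = |(⟨g, hgle⟩ : {f : E →L[ℝ] ℝ // ‖f‖ ≤ 1}).1 x *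
        (⟨g, hgle⟩ : {f : E →L[ℝ] ℝ // ‖f‖ ≤ 1}).1 x| := by
      have hgx' : g x = ‖x‖ := by exact_mod_cast hgx
      simp only [hgx']
      rw [sq, abs_of_nonneg (mul_nonneg (norm_nonneg x) (norm_nonneg x))]
    rw [this]
    exact le_trans (le_ciSup (hbdd _) _) (le_ciSup hbdd2 _)

lemma core_lemma {E : Type*} [NormedAddCommGroup E] {T : ℝ} (hT : 0 < T) {f : ℝ → E}
    (hf : Continuous f) (hBV : eVariationOn f Set.univ ≠ ⊤) :
    Tendsto (fun ε : ℝ => (1/ε) * ∫ r in (0:ℝ)..T, ‖f (r+ε) - f r‖^2)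
      (𝓝[>] (0:ℝ)) (𝓝 0) := by
  set V : ℝ → ℝ := fun r => (eVariationOn f (Set.Iic r)).toReal with hVdef
  have hfin : ∀ r : ℝ, eVariationOn f (Set.Iic r) ≠ ⊤ :=
    fun r => ne_top_of_le_ne_top hBV (eVariationOn.mono f (Set.subset_univ _))
  have hVmono : Monotone V := fun a b hab =>
    ENNReal.toReal_mono (hfin b) (eVariationOn.mono f (Set.Iic_subset_Iic.2 hab))
  have hdist : ∀ r ε : ℝ, 0 ≤ ε → ‖f (r+ε) - f r‖ ≤ V (r+ε) - V r := by
    intro r ε hε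
    have hle : r ≤ r + ε := le_add_of_nonneg_right hε
    have hunion : eVariationOn f (Set.Iic r) + eVariationOn f (Set.Icc r (r+ε))
        = eVariationOn f (Set.Iic (r+ε)) := by
      rw [← eVariationOn.union f isGreatest_Iic
        ⟨Set.left_mem_Icc.2 hle, fun y hy => hy.1⟩, Set.Iic_union_Icc_eq_Iic hle]
    have hedist : edist (f (r+ε)) (f r) ≤ eVariationOn f (Set.Icc r (r+ε)) :=
      eVariationOn.edist_le f ⟨hle, le_refl _⟩ ⟨le_refl _, hle⟩
    have h2 : eVariationOn f (Set.Iic r) + edist (f (r+ε)) (f r)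
        ≤ eVariationOn f (Set.Iic (r+ε)) := hunion ▸ add_le_add le_rfl hedist
    have h3 := ENNReal.toReal_mono (hfin _) h2
    rw [ENNReal.toReal_add (hfin r) (edist_ne_top _ _)] at h3
    have h4 : (edist (f (r+ε)) (f r)).toReal = ‖f (r+ε) - f r‖ := by
      rw [← dist_eq_norm, dist_edist]
    simp only [hVdef]
    linarith [h3, h4.symm.le, h4.le]
  -- integrability facts
  have hiVs : ∀ a b : ℝ, IntervalIntegrable V volume a b :=
    fun a b => hVmono.intervalIntegrable
  have hiVε : ∀ (ε a b : ℝ), IntervalIntegrable (fun r => V (r+ε)) volume a b := by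
    intro ε a b
    exact (show Monotone (fun r => V (r+ε)) from fun x y h => hVmono (add_le_add h le_rfl)).intervalIntegrable
  set C : ℝ := V (T+1) - V 0 with hCdef
  have hC : 0 ≤ C := sub_nonneg.2 (hVmono (by linarith))
  rw [Metric.tendsto_nhdsWithin_nhds]
  intro δ hδ
  set δ' : ℝ := δ / (2 * (C + 1)) with hδ'def
  have hδ' : 0 < δ' := by positivity
  have hUC := (isCompact_Icc : IsCompact (Set.Icc (0:ℝ) (T+1))).uniformContinuousOn_of_continuous
    hf.continuousOn
  rw [Metric.uniformContinuousOn_iff] at hUC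
  obtain ⟨η, hη, hmod⟩ := hUC δ' hδ'
  refine ⟨min η 1, lt_min hη one_pos, ?_⟩
  intro ε hεmem hεd
  have hε : 0 < ε := hεmem
  rw [Real.dist_eq, sub_zero, abs_of_pos hε, lt_min_iff] at hεd
  obtain ⟨hεη, hε1⟩ := hεd
  -- pointwise bound
  have hpt : ∀ r ∈ Set.Icc (0:ℝ) T, ‖f (r+ε) - f r‖^2 ≤ δ' * (V (r+ε) - V r) := by
    intro r hr
    have h1 : ‖f (r+ε) - f r‖ ≤ δ' := by
      have := hmod (r+ε) ⟨by linarith [hr.1], by linarith [hr.2]⟩ r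
        ⟨hr.1, by linarith [hr.2]⟩ (by
          rw [Real.dist_eq, add_sub_cancel_left, abs_of_pos hε]; exact hεη)
      rw [dist_eq_norm] at this
      exact this.le
    have h2 := hdist r ε hε.le
    calc ‖f (r+ε) - f r‖^2 = ‖f (r+ε) - f r‖ * ‖f (r+ε) - f r‖ := sq _
    _ ≤ δ' * (V (r+ε) - V r) := mul_le_mul h1 h2 (norm_nonneg _) hδ'.le
  have hi1 : IntervalIntegrable (fun r => ‖f (r+ε) - f r‖^2) volume 0 T :=
    (((hf.comp (continuous_id.add continuous_const)).sub hf).norm.pow 2).intervalIntegrable _ _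
  have hi2 : IntervalIntegrable (fun r => δ' * (V (r+ε) - V r)) volume 0 T :=
    (((hiVε ε 0 T).sub (hiVs 0 T)).const_mul δ')
  -- integral identity
  have e2 : (∫ r in (0:ℝ)..T, V (r+ε)) = ∫ r in ε..(T+ε), V r := by
    simpa using intervalIntegral.integral_comp_add_right (a := 0) (b := T) V ε
  have e3 : ((∫ r in (0:ℝ)..ε, V r) + ∫ r in ε..(T+ε), V r) = ∫ r in (0:ℝ)..(T+ε), V r :=
    intervalIntegral.integral_add_adjacent_intervals (hiVs 0 ε) (hiVs ε (T+ε))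
  have e4 : ((∫ r in (0:ℝ)..T, V r) + ∫ r in T..(T+ε), V r) = ∫ r in (0:ℝ)..(T+ε), V r :=
    intervalIntegral.integral_add_adjacent_intervals (hiVs 0 T) (hiVs T (T+ε))
  have e1 : (∫ r in (0:ℝ)..T, (V (r+ε) - V r))
      = (∫ r in T..(T+ε), V r) - ∫ r in (0:ℝ)..ε, V r := by
    rw [intervalIntegral.integral_sub (hiVε ε 0 T) (hiVs 0 T), e2]
    linarith
  -- bounds on boundary integrals
  have hb1 : (∫ r in T..(T+ε), V r) ≤ ε * V (T+1) := by
    have := intervalIntegral.integral_mono_on (by linarith : T ≤ T+ε) (hiVs T (T+ε))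
      (intervalIntegrable_const (c := V (T+1)))
      (fun x hx => hVmono (by linarith [hx.2]))
    simpa [smul_eq_mul] using this
  have hb2 : ε * V 0 ≤ ∫ r in (0:ℝ)..ε, V r := by
    have := intervalIntegral.integral_mono_on (hε.le)
      (intervalIntegrable_const (c := V 0)) (hiVs 0 ε)
      (fun x hx => hVmono hx.1)
    simpa [smul_eq_mul] using this
  have hIle : (∫ r in (0:ℝ)..T, ‖f (r+ε) - f r‖^2) ≤ δ' * (ε * C) := by
    calc (∫ r in (0:ℝ)..T, ‖f (r+ε) - f r‖^2)
        ≤ ∫ r in (0:ℝ)..T, δ' * (V (r+ε) - V r) :=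
          intervalIntegral.integral_mono_on hT.le hi1 hi2 hpt
    _ = δ' * ((∫ r in T..(T+ε), V r) - ∫ r in (0:ℝ)..ε, V r) := by
        rw [intervalIntegral.integral_const_mul, e1]
    _ ≤ δ' * (ε * C) := by
        have : (∫ r in T..(T+ε), V r) - ∫ r in (0:ℝ)..ε, V r ≤ ε * C := by
          rw [hCdef]; nlinarith [hb1, hb2]
        exact mul_le_mul_of_nonneg_left this hδ'.le
  have hg0 : 0 ≤ (1/ε) * ∫ r in (0:ℝ)..T, ‖f (r+ε) - f r‖^2 :=
    mul_nonneg (by positivity)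
      (intervalIntegral.integral_nonneg hT.le (fun x _ => by positivity))
  rw [Real.dist_eq, sub_zero, abs_of_nonneg hg0]
  have hfinal : (1/ε) * (∫ r in (0:ℝ)..T, ‖f (r+ε) - f r‖^2) ≤ δ' * C := by
    have := mul_le_mul_of_nonneg_left hIle (by positivity : (0:ℝ) ≤ 1/ε)
    calc (1/ε) * (∫ r in (0:ℝ)..T, ‖f (r+ε) - f r‖^2) ≤ (1/ε) * (δ' * (ε * C)) := this
    _ = δ' * C := by field_simp
  have hlast : δ' * C < δ := by
    rw [hδ'def]
    rw [div_mul_eq_mul_div, div_lt_iff₀ (by positivity)]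
    nlinarith
  exact lt_of_le_of_lt hfinal hlast

lemma riemann_tendsto {g : ℝ → ℝ} (hg : Continuous g) {T : ℝ} (hT : 0 < T) :
    Tendsto (fun n : ℕ => ∑ k ∈ Finset.range (n+1),
      (T/(n+1)) * g (k * (T/(n+1)))) atTop (𝓝 (∫ r in (0:ℝ)..T, g r)) := by
  rw [Metric.tendsto_atTop]
  intro δ hδ
  have hUC := (isCompact_Icc : IsCompact (Set.Icc (0:ℝ) T)).uniformContinuousOn_of_continuous
    hg.continuousOn
  rw [Metric.uniformContinuousOn_iff] at hUC
  set c : ℝ := δ/(2*(T+1)) with hcdef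
  have hc : 0 < c := by positivity
  obtain ⟨η, hη, hmod⟩ := hUC c hc
  obtain ⟨N, hN⟩ := exists_nat_gt (T/η)
  refine ⟨N, fun n hn => ?_⟩
  have hm : (0:ℝ) < (n:ℝ)+1 := by positivity
  set h : ℝ := T/((n:ℝ)+1) with hhdef
  have hh : 0 < h := by positivity
  have hhη : h < η := by
    rw [hhdef, div_lt_iff₀ hm]
    have h1 : (T/η) < (n:ℝ)+1 := by
      have : (N:ℝ) ≤ (n:ℝ) := by exact_mod_cast hn
      linarith
    calc T = (T/η)*η := by field_simp
    _ < ((n:ℝ)+1)*η := by exact mul_lt_mul_of_pos_right h1 hη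
    _ = η * ((n:ℝ)+1) := by ring
  set a : ℕ → ℝ := fun k => (k:ℝ) * h with hadef
  have hstep : ∀ k : ℕ, a (k+1) - a k = h := by
    intro k; simp only [hadef]; push_cast; ring
  have hmono : ∀ k : ℕ, a k ≤ a (k+1) := fun k => by linarith [hstep k, le_refl (a k)]
  have ham : a (n+1) = T := by
    simp only [hadef, hhdef]; push_cast; field_simp
  have ha0 : a 0 = 0 := by simp [hadef]
  have hsum : (∑ k ∈ Finset.range (n+1), ∫ r in a k..a (k+1), g r)
      = ∫ r in (0:ℝ)..T, g r := by
    rw [intervalIntegral.sum_integral_adjacent_intervals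
      (fun k _ => hg.intervalIntegrable _ _), ha0, ham]
  have hterm : ∀ k : ℕ, (T/((n:ℝ)+1)) * g ((k:ℝ) * (T/((n:ℝ)+1)))
      = ∫ _r in a k..a (k+1), g (a k) := by
    intro k
    rw [intervalIntegral.integral_const, smul_eq_mul]
    have : a (k+1) - a k = h := hstep k
    rw [this]
  have hbound : ∀ k ∈ Finset.range (n+1),
      |(∫ _r in a k..a (k+1), g (a k)) - ∫ r in a k..a (k+1), g r| ≤ c * h := by
    intro k hk
    rw [Finset.mem_range] at hk
    have hiC : IntervalIntegrable (fun _ => g (a k)) volume (a k) (a (k+1)) :=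
      intervalIntegrable_const
    rw [← intervalIntegral.integral_sub hiC (hg.intervalIntegrable _ _)]
    have hak1 : a (k+1) ≤ T := by
      rw [← ham, hadef]
      have : ((k:ℝ)+1) ≤ (n:ℝ)+1 := by exact_mod_cast Nat.succ_le_of_lt hk
      have := mul_le_mul_of_nonneg_right this hh.le
      push_cast
      linarith
    have hak0 : 0 ≤ a k := by positivity
    have hbd : ∀ r ∈ Set.uIoc (a k) (a (k+1)), ‖g (a k) - g r‖ ≤ c := by
      intro r hr
      rw [Set.uIoc_of_le (hmono k)] at hr
      have hr0 : 0 ≤ r := le_trans hak0 hr.1.le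
      have hr1 : r ≤ T := le_trans hr.2 hak1
      have hdd : dist (a k) r < η := by
        rw [Real.dist_eq, abs_sub_comm, abs_of_nonneg (by linarith [hr.1.le] : 0 ≤ r - a k)]
        have : r - a k ≤ h := by linarith [hr.2, hstep k]
        linarith
      have := hmod (a k) ⟨hak0, le_trans (hmono k) hak1⟩ r ⟨hr0, hr1⟩ hdd
      rw [Real.dist_eq] at this
      rw [Real.norm_eq_abs]
      exact this.le
    have := intervalIntegral.norm_integral_le_of_norm_le_const hbd
    rw [Real.norm_eq_abs] at this
    calc |∫ r in a k..a (k+1), (g (a k) - g r)| ≤ c * |a (k+1) - a k| := this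
    _ = c * h := by rw [hstep k, abs_of_pos hh]
  rw [Real.dist_eq, ← hsum]
  have hsub : (∑ k ∈ Finset.range (n+1), (T/((n:ℝ)+1)) * g ((k:ℝ) * (T/((n:ℝ)+1))))
      - (∑ k ∈ Finset.range (n+1), ∫ r in a k..a (k+1), g r)
      = ∑ k ∈ Finset.range (n+1),
        ((∫ _r in a k..a (k+1), g (a k)) - ∫ r in a k..a (k+1), g r) := by
    rw [← Finset.sum_sub_distrib]
    refine Finset.sum_congr rfl fun k _ => ?_
    rw [hterm k]
  rw [hsub]
  calc |∑ k ∈ Finset.range (n+1),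
        ((∫ _r in a k..a (k+1), g (a k)) - ∫ r in a k..a (k+1), g r)|
      ≤ ∑ k ∈ Finset.range (n+1),
        |(∫ _r in a k..a (k+1), g (a k)) - ∫ r in a k..a (k+1), g r| :=
        Finset.abs_sum_le_sum_abs _ _
  _ ≤ ∑ _k ∈ Finset.range (n+1), c * h := Finset.sum_le_sum hbound
  _ = ((n:ℝ)+1) * (c * h) := by rw [Finset.sum_const, Finset.card_range]; push_cast; ring
  _ = c * T := by rw [hhdef]; field_simp
  _ < δ := by rw [hcdef]; rw [div_mul_eq_mul_div, div_lt_iff₀ (by positivity)]; nlinarith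

lemma aesm_intervalIntegral {Ω : Type*} [MeasurableSpace Ω] {μ : MeasureTheory.Measure Ω}
    {T : ℝ} (hT : 0 < T) (u : ℝ → Ω → ℝ)
    (hm : ∀ t : ℝ, AEStronglyMeasurable (u t) μ)
    (hcont : ∀ᵐ ω ∂μ, Continuous fun t => u t ω) :
    AEStronglyMeasurable (fun ω => ∫ r in (0:ℝ)..T, u r ω) μ := by
  refine aestronglyMeasurable_of_tendsto_ae (f := fun (n : ℕ) ω =>
    ∑ k ∈ Finset.range (n+1), (T/(n+1)) * u (k * (T/(n+1))) ω) atTop ?_ ?_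
  · intro n
    exact Finset.aestronglyMeasurable_fun_sum _ fun k _ => (hm _).const_mul _
  · filter_upwards [hcont] with ω hω
    exact riemann_tendsto hω hT

/-- Let `H` be a separable Hilbert space continuously embedded (via an
injective continuous linear map `emb`) in a Banach space `ν̄₀`, and let `A` be an `H`-valued
continuous process which, viewed in `ν̄₀`, has bounded variation.  Set `ν₀ = ν̄₀*` and
`χ = ν₀ ⊗̂_π ν₀`.  Then
`(1/ε) ∫₀ᵀ |(A_{r+ε} − A_r) ⊗ (A_{r+ε} − A_r)|_{χ*} dr → 0` in probability as `ε → 0⁺`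
(the `χ*`-norm of the elementary tensor being the double supremum over the unit ball of
`ν̄₀*`); in particular `A` admits a zero `χ`-quadratic variation. -/
theorem stmt13 {Ω : Type*} [MeasurableSpace Ω] (μ : Measure Ω) [IsProbabilityMeasure μ]
    {H E : Type*}
    [NormedAddCommGroup H] [InnerProductSpace ℝ H] [CompleteSpace H]
    [TopologicalSpace.SeparableSpace H]
    [NormedAddCommGroup E] [NormedSpace ℝ E] [CompleteSpace E]
    (emb : H →L[ℝ] E) (hemb : Function.Injective emb)
    (T : ℝ) (hT : 0 < T)
    (A : ℝ → Ω → H)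
    (hAm : ∀ t : ℝ, AEStronglyMeasurable (A t) μ)
    (hext : ∀ (ω : Ω), (∀ t : ℝ, t ≤ 0 → A t ω = A 0 ω) ∧ ∀ t : ℝ, T ≤ t → A t ω = A T ω)
    (hcont : ∀ᵐ ω ∂μ, Continuous fun t => A t ω)
    (hBV : ∀ᵐ ω ∂μ, eVariationOn (fun t => emb (A t ω)) Set.univ ≠ ⊤) :
    TendstoInMeasure μ
      (fun ε ω => (1 / ε) * ∫ r in (0 : ℝ)..T,
        dualPairNorm E (emb (A (r + ε) ω) - emb (A r ω)))
      (𝓝[>] 0) (fun _ => (0 : ℝ)) := by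
  have hGG : (fun (ε : ℝ) (ω : Ω) => (1 / ε) * ∫ r in (0 : ℝ)..T,
      dualPairNorm E (emb (A (r + ε) ω) - emb (A r ω)))
      = fun (ε : ℝ) (ω : Ω) => (1 / ε) * ∫ r in (0 : ℝ)..T,
        ‖emb (A (r + ε) ω) - emb (A r ω)‖ ^ 2 := by
    funext ε ω
    congr 1
    exact intervalIntegral.integral_congr fun r _ => dualPairNorm_eq E _
  rw [hGG]
  have hmeas : ∀ ε : ℝ, AEStronglyMeasurable
      (fun ω => (1 / ε) * ∫ r in (0 : ℝ)..T, ‖emb (A (r + ε) ω) - emb (A r ω)‖ ^ 2) μ := by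
    intro ε
    refine AEStronglyMeasurable.const_mul ?_ _
    refine aesm_intervalIntegral hT _ (fun t => ?_) ?_
    · exact ((continuous_pow 2).comp_aestronglyMeasurable
        (((emb.continuous.comp_aestronglyMeasurable (hAm (t + ε))).sub
          (emb.continuous.comp_aestronglyMeasurable (hAm t))).norm))
    · filter_upwards [hcont] with ω hω
      have h1 : Continuous fun t : ℝ => emb (A (t + ε) ω) :=
        emb.continuous.comp (hω.comp (continuous_id.add continuous_const))
      have h2 : Continuous fun t : ℝ => emb (A t ω) := emb.continuous.comp hω
      exact ((h1.sub h2).norm).pow 2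
  have hae : ∀ᵐ ω ∂μ, Tendsto
      (fun ε : ℝ => (1 / ε) * ∫ r in (0 : ℝ)..T, ‖emb (A (r + ε) ω) - emb (A r ω)‖ ^ 2)
      (𝓝[>] 0) (𝓝 0) := by
    filter_upwards [hcont, hBV] with ω hω hbv
    exact core_lemma (f := fun t => emb (A t ω)) hT (emb.continuous.comp hω) hbv
  intro δ hδ
  rw [Filter.tendsto_iff_seq_tendsto]
  intro x hx
  have key : TendstoInMeasure μ
      (fun n : ℕ => fun ω => (1 / (x n)) * ∫ r in (0 : ℝ)..T,
        ‖emb (A (r + x n) ω) - emb (A r ω)‖ ^ 2) atTop (fun _ => (0 : ℝ)) := by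
    refine tendstoInMeasure_of_tendsto_ae (fun n => hmeas (x n)) ?_
    filter_upwards [hae] with ω hω
    exact hω.comp hx
  exact key δ hδ
end
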